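/- arXiv:0709.2644 — 2 statements merged into one kernel-verified Lean document; each statement's English description precedes it below -/
import Mathlib

section
/- If U₁, U₂ ⊆ ℍⁿ are ℝ-subspaces, each of ℍP-type, with ⟨u₁, u₂⟩ = 0 for all u₁ ∈ U₁ and u₂ ∈ U₂, then ι₊(U₁) + ι₋(U₂) (the set of matrices whose first column lies in U₁ and whose second column lies in U₂) is a Lie triple system of m. (These are the Lie triple systems of type (P×P, τ₁, τ₂), corresponding to products of totally geodesic projective subspaces of the two factors.) -/
open Matrix

noncomputable section

/-- The quaternions. -/
abbrev ℍq : Type := Quaternion ℝ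

/-- The tangent space `m` of `G₂(ℍ^{n+2})`: the `n × 2` quaternionic matrices. -/
abbrev MatH (n : ℕ) : Type := Matrix (Fin n) (Fin 2) ℍq

/-- The curvature tensor of `G₂(ℍ^{n+2})`:
`R(u,v)w = (u vᴴ − v uᴴ) w + w (vᴴ u − uᴴ v)`. -/
def Rcurv {n : ℕ} (u v w : MatH n) : MatH n :=
  (u * vᴴ - v * uᴴ) * w + w * (vᴴ * u - uᴴ * v)

/-- A subset of `m` is a Lie triple system if it is a real-linear subspace which is closed
under the curvature tensor. -/
def IsLTS {n : ℕ} (s : Set (MatH n)) : Prop :=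
  (∃ p : Submodule ℝ (MatH n), (p : Set (MatH n)) = s) ∧
    ∀ u ∈ s, ∀ v ∈ s, ∀ w ∈ s, Rcurv u v w ∈ s

/-- The first row index (row "1" in the paper's 1-based notation). -/
def r0 {n : ℕ} (hn : 2 ≤ n) : Fin n := ⟨0, by omega⟩

/-- The second row index (row "2" in the paper's 1-based notation). -/
def r1 {n : ℕ} (hn : 2 ≤ n) : Fin n := ⟨1, by omega⟩

/-- `q·E₁₁`: the matrix whose only nonzero entry is `q`, in position (1,1). -/
def E11 {n : ℕ} (hn : 2 ≤ n) (q : ℍq) : MatH n := Matrix.single (r0 hn) 0 q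

/-- `q·E₂₂`: the matrix whose only nonzero entry is `q`, in position (2,2). -/
def E22 {n : ℕ} (hn : 2 ≤ n) (q : ℍq) : MatH n := Matrix.single (r1 hn) 1 q

/-- `H₊ = E₁₁`. -/
def Hp {n : ℕ} (hn : 2 ≤ n) : MatH n := E11 hn 1

/-- `H₋ = E₂₂`. -/
def Hm {n : ℕ} (hn : 2 ≤ n) : MatH n := E22 hn 1

/-- The matrix `M_{c,ε}`: entry `(2,1)` equals `c/√2`, entry `(1,2)` equals `ε·conj(c)/√2`,
all other entries vanish. -/
def Mce {n : ℕ} (hn : 2 ≤ n) (c : ℍq) (ε : ℝ) : MatH n :=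
  Matrix.single (r1 hn) 0 ((Real.sqrt 2)⁻¹ • c) +
    Matrix.single (r0 hn) 1 ((ε * (Real.sqrt 2)⁻¹) • star c)

/-- The quaternionic inner product `⟨v,w⟩ = trace (vᴴ w)` on `m`. -/
def qip {n : ℕ} (v w : MatH n) : ℍq := Matrix.trace (vᴴ * w)

/-- The norm on `m`: `‖v‖ = √(Σ |v i j|²)`. -/
def hnorm {n : ℕ} (v : MatH n) : ℝ := Real.sqrt (∑ i, ∑ j, Quaternion.normSq (v i j))

/-- The symplectic group `Sp(k)` of quaternionic `k × k` matrices. -/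
def SpH (k : ℕ) : Set (Matrix (Fin k) (Fin k) ℍq) := {B | Bᴴ * B = 1}

/-- The `j`-th column of a matrix in `m`. -/
def col {n : ℕ} (j : Fin 2) (v : MatH n) : Fin n → ℍq := fun i => v i j

/-- The quaternionic inner product `⟨a,b⟩ = Σᵢ conj(aᵢ)·bᵢ` on `ℍⁿ`. -/
def vip {n : ℕ} (a b : Fin n → ℍq) : ℍq := ∑ i, star (a i) * b i

/-- The imaginary part `Im(q) = (q - conj q)/2` of a quaternion. -/
def imPart (q : ℍq) : ℍq := (q - star q) / 2

/-- Componentwise right multiplication of a vector by a quaternion. -/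
def rightMulV {n : ℕ} (u : Fin n → ℍq) (c : ℍq) : Fin n → ℍq := fun i => u i * c

end

noncomputable section

/-- `U ⊆ ℍⁿ` is quaternionic: stable under right multiplication by all quaternions. -/
def IsQuatSub {n : ℕ} (U : Submodule ℝ (Fin n → ℍq)) : Prop :=
  ∀ u ∈ U, ∀ c : ℍq, rightMulV u c ∈ U

/-- `U ⊆ ℍⁿ` is totally complex with respect to some unit imaginary quaternion `i`:
`U·i ⊆ U` and `U·j ⟂ U` for every unit imaginary quaternion `j` orthogonal to `i`. -/
def IsTotCplx {n : ℕ} (U : Submodule ℝ (Fin n → ℍq)) : Prop :=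
  ∃ i : ℍq, i.re = 0 ∧ Quaternion.normSq i = 1 ∧ (∀ u ∈ U, rightMulV u i ∈ U) ∧
    ∀ j : ℍq, j.re = 0 → Quaternion.normSq j = 1 → (star i * j).re = 0 →
      ∀ u ∈ U, ∀ u' ∈ U, (vip (rightMulV u j) u').re = 0

/-- `U ⊆ ℍⁿ` is totally real: `U·c ⟂ U` for every imaginary quaternion `c`. -/
def IsTotReal {n : ℕ} (U : Submodule ℝ (Fin n → ℍq)) : Prop :=
  ∀ c : ℍq, c.re = 0 → ∀ u ∈ U, ∀ u' ∈ U, (vip (rightMulV u c) u').re = 0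

/-- `U ⊆ ℍⁿ` is of type `(S³)`: a real-3-dimensional subspace of a quaternionic line. -/
def IsS3 {n : ℕ} (U : Submodule ℝ (Fin n → ℍq)) : Prop :=
  ∃ u₀ : Fin n → ℍq, (∀ u ∈ U, ∃ c : ℍq, u = rightMulV u₀ c) ∧
    Module.finrank ℝ ↥U = 3

/-- `U` is of `ℍP`-type: quaternionic, totally complex, totally real, or of type `(S³)`. -/
def IsHPType {n : ℕ} (U : Submodule ℝ (Fin n → ℍq)) : Prop :=
  IsQuatSub U ∨ IsTotCplx U ∨ IsTotReal U ∨ IsS3 U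

end

/-!
If `u, v, w` have first columns in `U₁` and second columns in `U₂ ⟂ U₁`, all cross terms
in `R(u,v)w` vanish and its `j`-th column is `R(a,b)c = a⟨b,c⟩ − b⟨a,c⟩ + c(⟨b,a⟩ − ⟨a,b⟩)`,
the curvature tensor of `ℍPⁿ⁻¹`, evaluated at the `j`-th columns `a, b, c`. So it suffices that a
subspace `U` of `ℍP`-type is invariant under this tensor. In the quaternionic, totally complex
and totally real cases every `⟨x,y⟩` with `x, y ∈ U` lies in `{c | U·c ⊆ U}` (which contains
`ℍ`, `ℝ ⊕ ℝi`, `ℝ` respectively; in the last two cases `⟨x,y⟩` is orthogonal to the complement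
of that span). For type `(S³)`, `U ⊆ u₀ℍ`, and a quaternion identity writes `R(a,b)c` as a real
combination of `a` and `b`.
-/

open Quaternion

lemma Quaternion.re_star_mul_eq_inner (a b : ℍq) : (star a * b).re = inner ℝ a b := by
  rw [Quaternion.inner_def]
  simp only [Quaternion.re_mul, Quaternion.re_star, Quaternion.imI_star, Quaternion.imJ_star,
    Quaternion.imK_star]
  ring

lemma Quaternion.mem_orthogonal_span_one_iff (c : ℍq) : c ∈ (ℝ ∙ (1 : ℍq))ᗮ ↔ c.re = 0 := by
  rw [Submodule.mem_orthogonal_singleton_iff_inner_right, ← Quaternion.re_star_mul_eq_inner]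
  simp

/-- The left side is `projCurv α β γ` for `n = 1`: quaternionic lines are curvature invariant. -/
lemma Quaternion.curv_identity (α β γ : ℍq) :
    α * (star β * γ) - β * (star α * γ) + γ * (star β * α - star α * β) =
      (4 * (star β * γ).re) • α - (4 * (star α * γ).re) • β := by
  ext <;>
    simp [Quaternion.re_mul, Quaternion.imI_mul, Quaternion.imJ_mul, Quaternion.imK_mul] <;>
    ring

lemma Submodule.mem_of_forall_inner_unit_orthogonal_eq_zero {E : Type*} [NormedAddCommGroup E]
    [InnerProductSpace ℝ E] (K : Submodule ℝ E) [K.HasOrthogonalProjection] {x : E}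
    (h : ∀ c ∈ Kᗮ, ‖c‖ = 1 → inner ℝ c x = 0) : x ∈ K := by
  rw [← K.orthogonal_orthogonal, Submodule.mem_orthogonal]
  intro c hc
  rcases eq_or_ne c 0 with rfl | hc0
  · exact inner_zero_left x
  have hunit := h (‖c‖⁻¹ • c) (Kᗮ.smul_mem _ hc) (norm_smul_inv_norm hc0)
  rwa [inner_smul_left, mul_eq_zero, or_iff_right (by simpa using hc0)] at hunit

noncomputable section QuaternionicVectors

variable {n : ℕ}

lemma rightMulV_add (u : Fin n → ℍq) (c d : ℍq) :
    rightMulV u (c + d) = rightMulV u c + rightMulV u d := by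
  funext i; simp [rightMulV, mul_add]

lemma rightMulV_sub (u : Fin n → ℍq) (c d : ℍq) :
    rightMulV u (c - d) = rightMulV u c - rightMulV u d := by
  funext i; simp [rightMulV, mul_sub]

lemma rightMulV_zero (u : Fin n → ℍq) : rightMulV u 0 = 0 := by
  funext i; simp [rightMulV]

lemma rightMulV_one (u : Fin n → ℍq) : rightMulV u 1 = u := by
  funext i; simp [rightMulV]

lemma rightMulV_smul (u : Fin n → ℍq) (r : ℝ) (c : ℍq) :
    rightMulV u (r • c) = r • rightMulV u c := by
  funext i; simp [rightMulV]

lemma rightMulV_mul (u : Fin n → ℍq) (c d : ℍq) :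
    rightMulV u (c * d) = rightMulV (rightMulV u c) d := by
  funext i; simp [rightMulV, mul_assoc]

lemma vip_rightMulV_left (u u' : Fin n → ℍq) (c : ℍq) :
    vip (rightMulV u c) u' = star c * vip u u' := by
  simp [vip, rightMulV, Finset.mul_sum, mul_assoc]

lemma vip_rightMulV_right (u u' : Fin n → ℍq) (c : ℍq) :
    vip u (rightMulV u' c) = vip u u' * c := by
  simp [vip, rightMulV, Finset.sum_mul, mul_assoc]

lemma star_vip (a b : Fin n → ℍq) : star (vip a b) = vip b a := by
  simp [vip, star_sum]

lemma vip_self_eq_coe (u : Fin n → ℍq) : vip u u = ((vip u u).re : ℍq) := by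
  have : vip u u = algebraMap ℝ ℍq (∑ k, normSq (u k)) := by
    simp only [vip, map_sum, Quaternion.algebraMap_def, Quaternion.star_mul_self]
  rw [this, Quaternion.algebraMap_def, Quaternion.re_coe]

def rightMulStab (U : Submodule ℝ (Fin n → ℍq)) : Submodule ℝ ℍq where
  carrier := {c | ∀ u ∈ U, rightMulV u c ∈ U}
  add_mem' hc hd u hu := by rw [rightMulV_add]; exact U.add_mem (hc u hu) (hd u hu)
  zero_mem' u _ := by rw [rightMulV_zero]; exact U.zero_mem
  smul_mem' r c hc u hu := by rw [rightMulV_smul]; exact U.smul_mem r (hc u hu)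

lemma one_mem_rightMulStab (U : Submodule ℝ (Fin n → ℍq)) : 1 ∈ rightMulStab U := by
  intro u hu; rwa [rightMulV_one]

/-- The curvature tensor of quaternionic projective space, with tangent space `ℍⁿ`. -/
def projCurv (a b c : Fin n → ℍq) : Fin n → ℍq :=
  rightMulV a (vip b c) - rightMulV b (vip a c) + rightMulV c (vip b a - vip a b)

lemma projCurv_mem_of_vip_mem_rightMulStab {U : Submodule ℝ (Fin n → ℍq)}
    (hU : ∀ x ∈ U, ∀ y ∈ U, vip x y ∈ rightMulStab U)
    {a b c : Fin n → ℍq} (ha : a ∈ U) (hb : b ∈ U) (hc : c ∈ U) : projCurv a b c ∈ U :=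
  U.add_mem (U.sub_mem (hU b hb c hc a ha) (hU a ha c hc b hb))
    ((rightMulStab U).sub_mem (hU b hb a ha) (hU a ha b hb) c hc)

lemma projCurv_rightMulV (u₀ : Fin n → ℍq) (α β γ : ℍq) :
    projCurv (rightMulV u₀ α) (rightMulV u₀ β) (rightMulV u₀ γ) =
      ((vip u₀ u₀).re * (4 * (star β * γ).re)) • rightMulV u₀ α -
        ((vip u₀ u₀).re * (4 * (star α * γ).re)) • rightMulV u₀ β := by
  have hvip (x y : ℍq) :
      vip (rightMulV u₀ x) (rightMulV u₀ y) = (vip u₀ u₀).re • (star x * y) := by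
    conv_lhs => rw [vip_rightMulV_left, vip_rightMulV_right, vip_self_eq_coe]
    rw [Quaternion.coe_mul_eq_smul, mul_smul_comm]
  rw [projCurv, hvip, hvip, hvip, hvip, ← smul_sub]
  simp only [rightMulV_smul, ← rightMulV_mul]
  rw [← smul_sub, ← smul_add, ← rightMulV_sub, ← rightMulV_add, Quaternion.curv_identity,
    rightMulV_sub, rightMulV_smul, rightMulV_smul, smul_sub, smul_smul, smul_smul]

end QuaternionicVectors

section HPType

variable {n : ℕ} {U : Submodule ℝ (Fin n → ℍq)}

lemma IsTotReal.vip_mem (hU : IsTotReal U) {x y : Fin n → ℍq} (hx : x ∈ U) (hy : y ∈ U) :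
    vip x y ∈ ℝ ∙ (1 : ℍq) :=
  Submodule.mem_of_forall_inner_unit_orthogonal_eq_zero _ fun c hc _ => by
    rw [← Quaternion.re_star_mul_eq_inner, ← vip_rightMulV_left]
    exact hU c ((Quaternion.mem_orthogonal_span_one_iff c).1 hc) x hx y hy

lemma IsTotCplx.exists_vip_mem (hU : IsTotCplx U) :
    ∃ i ∈ rightMulStab U, ∀ x ∈ U, ∀ y ∈ U, vip x y ∈ (ℝ ∙ (1 : ℍq)) ⊔ (ℝ ∙ i) := by
  obtain ⟨i, -, -, hiU, hperp⟩ := hU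
  refine ⟨i, hiU, fun x hx y hy => ?_⟩
  refine Submodule.mem_of_forall_inner_unit_orthogonal_eq_zero _ fun c hc hc1 => ?_
  rw [← Submodule.inf_orthogonal, Submodule.mem_inf,
    Quaternion.mem_orthogonal_span_one_iff, Submodule.mem_orthogonal_singleton_iff_inner_right,
    ← Quaternion.re_star_mul_eq_inner] at hc
  rw [← Quaternion.re_star_mul_eq_inner, ← vip_rightMulV_left]
  exact hperp c hc.1 (by rw [normSq_eq_norm_mul_self, hc1, one_mul]) hc.2 x hx y hy

lemma IsHPType.projCurv_mem (hU : IsHPType U) {a b c : Fin n → ℍq}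
    (ha : a ∈ U) (hb : b ∈ U) (hc : c ∈ U) : projCurv a b c ∈ U := by
  rcases hU with hQ | hC | hR | ⟨u₀, hline, -⟩
  · exact projCurv_mem_of_vip_mem_rightMulStab (fun _ _ _ _ u hu => hQ u hu _) ha hb hc
  · obtain ⟨i, hi, hvip⟩ := hC.exists_vip_mem
    have hle : (ℝ ∙ (1 : ℍq)) ⊔ (ℝ ∙ i) ≤ rightMulStab U :=
      sup_le ((Submodule.span_singleton_le_iff_mem _ _).2 (one_mem_rightMulStab U))
        ((Submodule.span_singleton_le_iff_mem _ _).2 hi)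
    exact projCurv_mem_of_vip_mem_rightMulStab (fun x hx y hy => hle (hvip x hx y hy)) ha hb hc
  · have hle : ℝ ∙ (1 : ℍq) ≤ rightMulStab U :=
      (Submodule.span_singleton_le_iff_mem _ _).2 (one_mem_rightMulStab U)
    exact projCurv_mem_of_vip_mem_rightMulStab (fun x hx y hy => hle (hR.vip_mem hx hy)) ha hb hc
  · obtain ⟨α, rfl⟩ := hline a ha
    obtain ⟨β, rfl⟩ := hline b hb
    obtain ⟨γ, rfl⟩ := hline c hc
    rw [projCurv_rightMulV]
    exact U.sub_mem (U.smul_mem _ ha) (U.smul_mem _ hb)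

end HPType

section Columns

variable {n : ℕ}

lemma col_add (j : Fin 2) (x y : MatH n) : col j (x + y) = col j x + col j y := rfl

lemma col_sub (j : Fin 2) (x y : MatH n) : col j (x - y) = col j x - col j y := rfl

lemma col_mul_conjTranspose_mul (u v w : MatH n) (j : Fin 2) :
    col j (u * vᴴ * w) = ∑ k, rightMulV (col k u) (vip (col k v) (col j w)) := by
  funext i
  simp only [_root_.col, rightMulV, vip, Matrix.mul_apply, Matrix.conjTranspose_apply,
    Finset.sum_apply, Finset.sum_mul, Finset.mul_sum, mul_assoc]
  exact Finset.sum_comm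

lemma col_Rcurv_of_orthogonal {u v w : MatH n} {j k : Fin 2} (hjk : j ≠ k)
    (hvw : vip (col k v) (col j w) = 0) (huw : vip (col k u) (col j w) = 0)
    (hvu : vip (col k v) (col j u) = 0) (huv : vip (col k u) (col j v) = 0) :
    col j (Rcurv u v w) = projCurv (col j u) (col j v) (col j w) := by
  have hexp : Rcurv u v w = u * vᴴ * w - v * uᴴ * w + (w * vᴴ * u - w * uᴴ * v) := by
    simp only [Rcurv, Matrix.sub_mul, Matrix.mul_sub, Matrix.mul_assoc]
  have hsum (f : Fin 2 → Fin n → ℍq) : ∑ i, f i = f j + f k :=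
    Fintype.sum_eq_add j k hjk (by omega)
  simp only [hexp, col_add, col_sub, col_mul_conjTranspose_mul, hsum, hvw, huw, hvu, huv,
    rightMulV_zero, projCurv, rightMulV_sub]
  abel

end Columns

def columnSubmodule {n : ℕ} (U₁ U₂ : Submodule ℝ (Fin n → ℍq)) : Submodule ℝ (MatH n) where
  carrier := {v | col 0 v ∈ U₁ ∧ col 1 v ∈ U₂}
  add_mem' hx hy := ⟨U₁.add_mem hx.1 hy.1, U₂.add_mem hx.2 hy.2⟩
  zero_mem' := ⟨U₁.zero_mem, U₂.zero_mem⟩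
  smul_mem' r _ hx := ⟨U₁.smul_mem r hx.1, U₂.smul_mem r hx.2⟩

theorem stmt14_general (n : ℕ) (U₁ U₂ : Submodule ℝ (Fin n → ℍq))
    (h1 : IsHPType U₁) (h2 : IsHPType U₂)
    (horth : ∀ u₁ ∈ U₁, ∀ u₂ ∈ U₂, vip u₁ u₂ = 0) :
    IsLTS {v : MatH n | col 0 v ∈ U₁ ∧ col 1 v ∈ U₂} := by
  have horth' : ∀ u₂ ∈ U₂, ∀ u₁ ∈ U₁, vip u₂ u₁ = 0 := fun u₂ hu₂ u₁ hu₁ => by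
    rw [← star_vip, horth u₁ hu₁ u₂ hu₂, star_zero]
  refine ⟨⟨columnSubmodule U₁ U₂, rfl⟩, ?_⟩
  rintro u ⟨hu₁, hu₂⟩ v ⟨hv₁, hv₂⟩ w ⟨hw₁, hw₂⟩
  constructor
  · rw [col_Rcurv_of_orthogonal zero_ne_one (horth' _ hv₂ _ hw₁) (horth' _ hu₂ _ hw₁)
      (horth' _ hv₂ _ hu₁) (horth' _ hu₂ _ hv₁)]
    exact h1.projCurv_mem hu₁ hv₁ hw₁
  · rw [col_Rcurv_of_orthogonal one_ne_zero (horth _ hv₁ _ hw₂) (horth _ hu₁ _ hw₂)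
      (horth _ hv₁ _ hu₂) (horth _ hu₁ _ hv₂)]
    exact h2.projCurv_mem hu₂ hv₂ hw₂

/-- The Lie triple systems of type `(P×P, τ₁, τ₂)`: for `⟨·,·⟩`-orthogonal subspaces
`U₁, U₂ ⊆ ℍⁿ` of `ℍP`-type, the set `ι₊(U₁) + ι₋(U₂)` of matrices whose first column lies
in `U₁` and whose second column lies in `U₂` is a Lie triple system of `m`. -/
theorem stmt14 (n : ℕ) (hn : 2 ≤ n) (U₁ U₂ : Submodule ℝ (Fin n → ℍq))
    (h1 : IsHPType U₁) (h2 : IsHPType U₂)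
    (horth : ∀ u₁ ∈ U₁, ∀ u₂ ∈ U₂, vip u₁ u₂ = 0) :
    IsLTS {v : MatH n | col 0 v ∈ U₁ ∧ col 1 v ∈ U₂} :=
  stmt14_general n U₁ U₂ h1 h2 horth
end

section
/- The real subspace m' := ℝ·(H₊ + H₋) + {M_{c,1} : c ∈ ℍ} of m is a Lie triple system of real dimension 5. (This is the Lie triple system of type (S⁵, φ=π/4); the corresponding totally geodesic submanifold is a 5-sphere of radius 1/√2, all of whose nonzero tangent vectors have characteristic angle π/4.) -/
open Matrix

/-!
Left multiplication by `P = H₊ + H₋` satisfies `Pᴴ P = 1`, so it embeds the `2 × 2` quaternionic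
matrices into `m` and turns the curvature tensor into the same formula on `2 × 2` matrices.
The elements of `m'` are exactly `P (s + J d)` with `s` real and `J d = [[0, d̄], [d, 0]]`
hermitian. Real scalars are central, so the curvature of three such elements is the double
commutator `[[J a, J b], J e]`, which is again of the form `J d`. Finally `(s, d) ↦ P (s + J d)`
is injective on `ℝ × ℍ`, so `m'` has dimension `1 + 4 = 5`.
-/

noncomputable section

instance : StarModule ℝ (Quaternion ℝ) :=
  ⟨fun r a => Quaternion.star_smul r a⟩

def curvatureForm {R : Type*} [Ring R] [Star R] (a b c : R) : R :=
  (a * star b - b * star a) * c + c * (star b * a - star a * b)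

theorem Rcurv_mul_of_conjTranspose_mul_self {n : ℕ} {P : Matrix (Fin n) (Fin 2) ℍq}
    (hP : Pᴴ * P = 1) (A B C : Matrix (Fin 2) (Fin 2) ℍq) :
    Rcurv (P * A) (P * B) (P * C) = P * curvatureForm A B C := by
  have hPP (X : Matrix (Fin 2) (Fin 2) ℍq) : Pᴴ * (P * X) = X := by
    rw [← Matrix.mul_assoc, hP, Matrix.one_mul]
  simp only [Rcurv, curvatureForm, star_eq_conjTranspose, conjTranspose_mul, Matrix.sub_mul,
    Matrix.mul_sub, Matrix.mul_add, Matrix.mul_assoc, hPP]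

theorem curvatureForm_smul_one_add {R : Type*} [Ring R] [StarRing R] [Algebra ℝ R]
    [StarModule ℝ R] {X Y : R} (hX : IsSelfAdjoint X) (hY : IsSelfAdjoint Y) (s t r : ℝ)
    (Z : R) :
    curvatureForm (s • 1 + X) (t • 1 + Y) (r • 1 + Z) = ⁅⁅X, Y⁆, Z⁆ := by
  simp only [curvatureForm, star_add, star_smul, star_trivial, star_one, hX.star_eq, hY.star_eq,
    Ring.lie_def, add_mul, mul_add, sub_mul, mul_sub, smul_mul_assoc, mul_smul_comm, one_mul,
    mul_one]
  module

section HermOffDiag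

variable {α : Type*}

def hermOffDiag [Zero α] [Star α] (d : α) : Matrix (Fin 2) (Fin 2) α :=
  !![0, star d; d, 0]

theorem hermOffDiag_eq_single_add_single [AddMonoid α] [Star α] (d : α) :
    hermOffDiag d = Matrix.single 0 1 (star d) + Matrix.single 1 0 d := by
  ext i j : 1
  fin_cases i <;> fin_cases j <;> simp [hermOffDiag]

theorem isSelfAdjoint_hermOffDiag [AddMonoid α] [StarAddMonoid α] (d : α) :
    IsSelfAdjoint (hermOffDiag d) := by
  ext i j : 1
  fin_cases i <;> fin_cases j <;> simp [hermOffDiag]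

theorem lie_lie_hermOffDiag [Ring α] [StarRing α] (a b e : α) :
    ⁅⁅hermOffDiag a, hermOffDiag b⁆, hermOffDiag e⁆ =
      hermOffDiag ((a * star b - b * star a) * e - e * (star a * b - star b * a)) := by
  ext i j : 1
  fin_cases i <;> fin_cases j <;> simp [hermOffDiag, Ring.lie_def]
  noncomm_ring

end HermOffDiag

@[simps]
def sphereBlock : ℝ × ℍq →ₗ[ℝ] Matrix (Fin 2) (Fin 2) ℍq where
  toFun x := x.1 • 1 + hermOffDiag x.2
  map_add' x y := by
    ext i j : 1
    fin_cases i <;> fin_cases j <;> simp [hermOffDiag, add_smul]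
  map_smul' r x := by
    ext i j : 1
    fin_cases i <;> fin_cases j <;> simp [hermOffDiag, mul_smul]

theorem sphereBlock_injective : Function.Injective sphereBlock := by
  rw [← LinearMap.ker_eq_bot, LinearMap.ker_eq_bot']
  rintro ⟨s, d⟩ h
  exact Prod.ext (by simpa [hermOffDiag] using congrFun₂ h 0 0)
    (by simpa [hermOffDiag] using congrFun₂ h 1 0)

section Embedding

variable {n : ℕ} (hn : 2 ≤ n)

theorem r0_ne_r1 : r0 hn ≠ r1 hn := by
  simp [r0, r1, Fin.ext_iff]

theorem conjTranspose_mul_self_Hp_add_Hm : (Hp hn + Hm hn)ᴴ * (Hp hn + Hm hn) = 1 := by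
  simp only [Hp, Hm, E11, E22, conjTranspose_add, conjTranspose_single, star_one,
    Matrix.add_mul, Matrix.mul_add, single_mul_single_same, mul_one,
    single_mul_single_of_ne _ _ _ _ (r0_ne_r1 hn),
    single_mul_single_of_ne _ _ _ _ (r0_ne_r1 hn).symm, add_zero, zero_add]
  ext i j : 1
  fin_cases i <;> fin_cases j <;> simp

theorem Hp_add_Hm_mul_hermOffDiag (d : ℍq) :
    (Hp hn + Hm hn) * hermOffDiag d =
      Matrix.single (r1 hn) 0 d + Matrix.single (r0 hn) 1 (star d) := by
  simp only [Hp, Hm, E11, E22, hermOffDiag_eq_single_add_single, Matrix.add_mul, Matrix.mul_add,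
    single_mul_single_same, one_mul, single_mul_single_of_ne _ _ _ _ Fin.zero_ne_one,
    single_mul_single_of_ne _ _ _ _ Fin.zero_ne_one.symm, add_zero, zero_add, add_comm]

theorem smul_Hp_add_Hm_add_Mce (s : ℝ) (c : ℍq) :
    s • (Hp hn + Hm hn) + Mce hn c 1 =
      (Hp hn + Hm hn) * (s • 1 + hermOffDiag ((√2)⁻¹ • c)) := by
  rw [Matrix.mul_add, Matrix.mul_smul, Matrix.mul_one, Hp_add_Hm_mul_hermOffDiag, Mce, one_mul,
    Quaternion.star_smul]

@[simps]
def sphereEmbedding : ℝ × ℍq →ₗ[ℝ] MatH n where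
  toFun x := (Hp hn + Hm hn) * sphereBlock x
  map_add' x y := by rw [map_add, Matrix.mul_add]
  map_smul' r x := by rw [map_smul, Matrix.mul_smul, RingHom.id_apply]

theorem sphereEmbedding_injective : Function.Injective (sphereEmbedding hn) := by
  have hleft (x : ℝ × ℍq) : (Hp hn + Hm hn)ᴴ * sphereEmbedding hn x = sphereBlock x := by
    rw [sphereEmbedding_apply, ← Matrix.mul_assoc, conjTranspose_mul_self_Hp_add_Hm,
      Matrix.one_mul]
  intro x y h
  apply sphereBlock_injective
  rw [← hleft x, h, hleft y]

theorem finrank_range_sphereEmbedding :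
    Module.finrank ℝ (LinearMap.range (sphereEmbedding hn)) = 5 := by
  rw [LinearMap.finrank_range_of_inj (sphereEmbedding_injective hn), Module.finrank_prod,
    Module.finrank_self, Quaternion.finrank_eq_four]

theorem setOf_smul_Hp_add_Hm_add_Mce_eq_range :
    {v : MatH n | ∃ s : ℝ, ∃ c : ℍq, v = s • (Hp hn + Hm hn) + Mce hn c 1} =
      LinearMap.range (sphereEmbedding hn) := by
  ext v
  constructor
  · rintro ⟨s, c, rfl⟩
    exact ⟨(s, (√2)⁻¹ • c), (smul_Hp_add_Hm_add_Mce hn s c).symm⟩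
  · rintro ⟨⟨s, d⟩, rfl⟩
    refine ⟨s, √2 • d, ?_⟩
    rw [smul_Hp_add_Hm_add_Mce, smul_smul, inv_mul_cancel₀ (by positivity), one_smul]
    rfl

end Embedding

/-- The Lie triple system of type `(S⁵, φ=π/4)`: the subspace
`ℝ·(H₊+H₋) + {M_{c,1} : c ∈ ℍ}` of `m` is a Lie triple system of real dimension 5. -/
theorem stmt19 (n : ℕ) (hn : 2 ≤ n) :
    IsLTS {v : MatH n | ∃ s : ℝ, ∃ c : ℍq, v = s • (Hp hn + Hm hn) + Mce hn c 1} ∧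
    ∀ p : Submodule ℝ (MatH n),
      (p : Set (MatH n)) =
        {v : MatH n | ∃ s : ℝ, ∃ c : ℍq, v = s • (Hp hn + Hm hn) + Mce hn c 1} →
      Module.finrank ℝ ↥p = 5 := by
  rw [setOf_smul_Hp_add_Hm_add_Mce_eq_range]
  refine ⟨⟨⟨_, rfl⟩, ?_⟩, fun p hp => ?_⟩
  · rintro _ ⟨⟨s, a⟩, rfl⟩ _ ⟨⟨t, b⟩, rfl⟩ _ ⟨⟨r, e⟩, rfl⟩
    refine ⟨(0, (a * star b - b * star a) * e - e * (star a * b - star b * a)), ?_⟩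
    simp only [sphereEmbedding_apply, sphereBlock_apply, zero_smul, zero_add]
    rw [Rcurv_mul_of_conjTranspose_mul_self (conjTranspose_mul_self_Hp_add_Hm hn),
      curvatureForm_smul_one_add (isSelfAdjoint_hermOffDiag a) (isSelfAdjoint_hermOffDiag b),
      lie_lie_hermOffDiag]
  · rw [SetLike.coe_injective hp, finrank_range_sphereEmbedding]

end
end
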